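/- arXiv:2505.02373 — 10 statements merged into one kernel-verified Lean document; each statement's English description precedes it below -/
import Mathlib

section
/- If a point p on the terrain is visible from a guard u = (x, y) lying on or above the terrain, then p is also visible from any guard u' = (x, y + δ) with δ > 0. -/
open Set

/-- Visibility: the segment from terrain point `p` to guard `u` stays on or above
the terrain, which is the graph of `f` over `[a,b]`. -/
def Vis (a b : ℝ) (f : ℝ → ℝ) (p u : ℝ × ℝ) : Prop :=
  ∀ q ∈ segment ℝ p u, q.1 ∈ Set.Icc a b → f q.1 ≤ q.2

/-- The witness is the point with the same segment parameters `c, d`; it lies lower by `d * δ`. -/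
lemma exists_mem_segment_below_of_mem_segment_raise {p u q : ℝ × ℝ} {δ : ℝ} (hδ : 0 ≤ δ)
    (hq : q ∈ segment ℝ p (u.1, u.2 + δ)) :
    ∃ q' ∈ segment ℝ p u, q'.1 = q.1 ∧ q'.2 ≤ q.2 := by
  obtain ⟨c, d, hc, hd, hcd, rfl⟩ := hq
  refine ⟨c • p + d • u, ⟨c, d, hc, hd, hcd, rfl⟩, by simp, ?_⟩
  simp only [Prod.snd_add, Prod.smul_snd, smul_eq_mul]
  gcongr
  exact le_add_of_nonneg_right hδ

lemma Vis.raise_guard {a b : ℝ} {f : ℝ → ℝ} {p u : ℝ × ℝ} (hvis : Vis a b f p u) {δ : ℝ}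
    (hδ : 0 ≤ δ) : Vis a b f p (u.1, u.2 + δ) := by
  intro q hq hq1
  obtain ⟨q', hq', hq'1, hq'2⟩ := exists_mem_segment_below_of_mem_segment_raise hδ hq
  rw [← hq'1] at hq1 ⊢
  exact (hvis q' hq' hq1).trans hq'2

theorem stmt0_general (a b : ℝ) (f : ℝ → ℝ) (u : ℝ × ℝ)
    (t : ℝ)
    (hvis : Vis a b f (t, f t) u) (δ : ℝ) (hδ : 0 < δ) :
    Vis a b f (t, f t) (u.1, u.2 + δ) :=
  hvis.raise_guard hδ.le

/-- If a point on the terrain is visible from a guard `u = (x, y)` lying on or above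
the terrain, it is also visible from `u' = (x, y + δ)` for any `δ > 0`. -/
theorem stmt0 (a b : ℝ) (f : ℝ → ℝ) (u : ℝ × ℝ)
    (hu : u.1 ∈ Set.Icc a b → f u.1 ≤ u.2)
    (t : ℝ) (ht : t ∈ Set.Icc a b)
    (hvis : Vis a b f (t, f t) u) (δ : ℝ) (hδ : 0 < δ) :
    Vis a b f (t, f t) (u.1, u.2 + δ) :=
  stmt0_general a b f u t hvis δ hδ
end

section
/- Let T be the graph of a piecewise linear function f : [a,b] → ℝ and let u and w be points on a horizontal line L above T with x(w) < x(u). If p is a point on T with x(u) < x(p) and p is not visible from u, then p is not visible from w. -/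
/-! Let `v` be the point of the segment from `p` to `w` vertically below `u`; it lies below `L`.
If `w` sees `p`, so does `v`, and raising the guard from `v` to `u` keeps `p` visible, because
the segment `pu` lies above `pv` at every abscissa. -/

open Set

theorem exists_mem_segment_fst_eq {p w : ℝ × ℝ} {x : ℝ} (hx : x ∈ segment ℝ p.1 w.1) :
    ∃ v ∈ segment ℝ p w, v.1 = x := by
  rw [← AffineMap.coe_fst (k := ℝ), ← image_segment] at hx
  simpa using hx

namespace Vis

variable {a b : ℝ} {f : ℝ → ℝ} {p u v w : ℝ × ℝ}

theorem of_mem_segment (hw : Vis a b f p w) (hv : v ∈ segment ℝ p w) : Vis a b f p v :=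
  fun q hq => hw q ((convex_segment p w).segment_subset (left_mem_segment ℝ p w) hv hq)

theorem of_fst_eq_of_snd_le (hv : Vis a b f p v) (h₁ : u.1 = v.1) (h₂ : v.2 ≤ u.2) :
    Vis a b f p u := by
  rintro _ ⟨c, d, hc, hd, hcd, rfl⟩ hx
  have hfst : (c • p + d • v).1 = (c • p + d • u).1 := by simp [h₁]
  calc f (c • p + d • u).1 ≤ (c • p + d • v).2 :=
        hfst ▸ hv _ ⟨c, d, hc, hd, hcd, rfl⟩ (hfst ▸ hx)
    _ ≤ (c • p + d • u).2 := by simp only [Prod.snd_add, Prod.smul_snd, smul_eq_mul]; gcongr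

end Vis

/-- If `p ∈ T` with `x(u) < x(p)` is not visible from `u` on a horizontal line `L`
strictly above `T`, then `p` is not visible from any `w ∈ L` with `x(w) < x(u)`. -/
theorem stmt1 (a b h : ℝ) (f : ℝ → ℝ)
    (hT : ∀ t ∈ Set.Icc a b, f t < h)
    (u w : ℝ × ℝ) (hu : u.2 = h) (hw : w.2 = h) (hwu : w.1 < u.1)
    (t : ℝ) (ht : t ∈ Set.Icc a b) (htu : u.1 < t)
    (hnv : ¬ Vis a b f (t, f t) u) :
    ¬ Vis a b f (t, f t) w := by
  intro hvis
  obtain ⟨v, hv, hv₁⟩ := exists_mem_segment_fst_eq (p := (t, f t)) (w := w) (x := u.1) <| by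
    rw [segment_eq_uIcc, uIcc_of_ge (by linarith)]
    exact ⟨hwu.le, htu.le⟩
  have hv₂ : v.2 ≤ u.2 := by
    have := segment_subset_uIcc _ _ (Prod.segment_subset _ _ hv).2
    rw [uIcc_of_le (by simpa [hw] using (hT t ht).le)] at this
    simpa [hu, hw] using this.2
  exact hnv ((hvis.of_mem_segment hv).of_fst_eq_of_snd_le hv₁.symm hv₂)
end

section
/- Let T be an x-monotone polygonal chain and let e = vv' be an edge of T with x(v) < x(v'). If a point u above T with x(u) ≥ x(v') sees both endpoints v and v' of e, then u sees every point of e (e is fully visible from u). -/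
/-
Let `L(x) = m x + c` be the line carrying the edge. Seeing `v` from `u` at abscissa `x(v')`
forces `u` to lie on or above `L`; hence the segment from any point of the edge to `u` stays
above `L`, which is the terrain as long as the abscissa stays in `[x(v), x(v')]`. Beyond
`x(v')` the segment from a point of the edge to `u` lies above the segment `v'u`, which is
above the terrain because `v'` is visible.
-/

open Set

def lineGap (m c : ℝ) (p : ℝ × ℝ) : ℝ := p.2 - (m * p.1 + c)

theorem exists_mem_segment_fst_eq_s3 {p u : ℝ × ℝ} {x : ℝ} (hx : x ∈ Icc p.1 u.1) :
    ∃ q ∈ segment ℝ p u, q.1 = x := by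
  rw [← segment_eq_Icc (hx.1.trans hx.2)] at hx
  simpa using (image_segment ℝ (LinearMap.fst ℝ ℝ ℝ).toAffineMap p u).ge hx

theorem fst_mem_Icc_of_mem_segment {p u q : ℝ × ℝ} (h : p.1 ≤ u.1) (hq : q ∈ segment ℝ p u) :
    q.1 ∈ Icc p.1 u.1 := by
  rw [← segment_eq_Icc h]
  simpa using (image_segment ℝ (LinearMap.fst ℝ ℝ ℝ).toAffineMap p u).le (mem_image_of_mem _ hq)

section lineGap

variable {m c : ℝ}

theorem exists_lineGap_of_mem_segment {p u q : ℝ × ℝ} (hq : q ∈ segment ℝ p u) :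
    ∃ β ∈ Icc (0 : ℝ) 1, q.1 - p.1 = β * (u.1 - p.1) ∧
      lineGap m c q = (1 - β) * lineGap m c p + β * lineGap m c u := by
  obtain ⟨α, β, hα, hβ, hαβ, rfl⟩ := hq
  obtain rfl : α = 1 - β := by linarith
  refine ⟨β, ⟨hβ, by linarith⟩, ?_, ?_⟩ <;>
    simp only [lineGap, Prod.fst_add, Prod.snd_add, Prod.smul_fst, Prod.smul_snd,
      smul_eq_mul] <;> ring

theorem lineGap_nonneg_of_mem_segment {p u q : ℝ × ℝ} (hp : 0 ≤ lineGap m c p)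
    (hu : 0 ≤ lineGap m c u) (hq : q ∈ segment ℝ p u) : 0 ≤ lineGap m c q := by
  obtain ⟨β, ⟨hβ0, hβ1⟩, -, hgap⟩ := exists_lineGap_of_mem_segment (m := m) (c := c) hq
  rw [hgap]
  have := mul_nonneg (sub_nonneg.2 hβ1) hp
  have := mul_nonneg hβ0 hu
  linarith

/-- Two segments from the line to a common point `u` above it: on a common vertical, the one
whose foot lies further from `u` is the higher one. -/
theorem snd_le_of_mem_segment_of_fst_eq {p p' u q q' : ℝ × ℝ} (hp : lineGap m c p = 0)
    (hp' : lineGap m c p' = 0) (hu : 0 ≤ lineGap m c u) (hpp' : p.1 ≤ p'.1) (hp'u : p'.1 < u.1)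
    (hq : q ∈ segment ℝ p u) (hq' : q' ∈ segment ℝ p' u) (hqq' : q.1 = q'.1) :
    q'.2 ≤ q.2 := by
  obtain ⟨β, -, hβx, hβgap⟩ := exists_lineGap_of_mem_segment (m := m) (c := c) hq
  obtain ⟨μ, ⟨-, hμ1⟩, hμx, hμgap⟩ := exists_lineGap_of_mem_segment (m := m) (c := c) hq'
  -- `q.1 - u.1 = (1 - β) (p.1 - u.1) = (1 - μ) (p'.1 - u.1)`, and `p.1` is further from `u.1`
  have hμβ : μ ≤ β := by
    by_contra! hβμ
    nlinarith [mul_le_mul_of_nonneg_left hpp' (sub_nonneg.2 hμ1)]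
  have hgap : lineGap m c q' ≤ lineGap m c q := by
    rw [hβgap, hμgap, hp, hp']
    nlinarith
  simpa only [lineGap, hqq', add_le_add_iff_right, sub_le_sub_iff_right] using hgap

end lineGap

theorem lineGap_nonneg_of_vis {a b m c s t : ℝ} {f : ℝ → ℝ} {u : ℝ × ℝ} (hst : s < t)
    (ht : t ∈ Icc a b) (htu : t ≤ u.1) (hfs : f s = m * s + c) (hft : f t = m * t + c)
    (hv : Vis a b f (s, f s) u) : 0 ≤ lineGap m c u := by
  obtain ⟨q, hq, hqt⟩ := exists_mem_segment_fst_eq_s3 (p := (s, f s)) (u := u) ⟨hst.le, htu⟩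
  obtain ⟨β, -, hβx, hgap⟩ := exists_lineGap_of_mem_segment (m := m) (c := c) hq
  have hβ : 0 < β := by
    by_contra! hβ
    nlinarith [mul_nonneg_of_nonpos_of_nonpos hβ (sub_nonpos.2 (hst.le.trans htu))]
  have hq_gap : 0 ≤ lineGap m c q := by
    have := hv q hq (hqt ▸ ht)
    simp only [lineGap, hqt] at this ⊢
    linarith
  have hs_gap : lineGap m c (s, f s) = 0 := by simp [lineGap, hfs]
  rw [hgap, hs_gap, mul_zero, zero_add] at hq_gap
  exact nonneg_of_mul_nonneg_right hq_gap hβ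

theorem stmt3_general (a b : ℝ) (f : ℝ → ℝ) (s t m c : ℝ)
    (hst : s < t) (ht : t ∈ Set.Icc a b)
    (haff : ∀ r ∈ Set.Icc s t, f r = m * r + c)
    (u : ℝ × ℝ) (hur : t ≤ u.1)
    (hv : Vis a b f (s, f s) u) (hv' : Vis a b f (t, f t) u) :
    ∀ r ∈ Set.Icc s t, Vis a b f (r, f r) u := by
  have on_line : ∀ r ∈ Icc s t, lineGap m c (r, f r) = 0 := fun r hr => by
    simp [lineGap, haff r hr]
  have hu := lineGap_nonneg_of_vis hst ht hur (haff s ⟨le_rfl, hst.le⟩)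
    (haff t ⟨hst.le, le_rfl⟩) hv
  intro r hr q hq hqab
  obtain ⟨hrq, hqu⟩ := fst_mem_Icc_of_mem_segment (hr.2.trans hur) hq
  rcases le_or_gt q.1 t with hqt | htq
  · have hq_gap := lineGap_nonneg_of_mem_segment (on_line r hr).ge hu hq
    simp only [lineGap, ← haff q.1 ⟨hr.1.trans hrq, hqt⟩] at hq_gap
    linarith
  · obtain ⟨q', hq', hq'q⟩ := exists_mem_segment_fst_eq_s3 (p := (t, f t)) (u := u) ⟨htq.le, hqu⟩
    calc f q.1 ≤ q'.2 := hq'q ▸ hv' q' hq' (hq'q ▸ hqab)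
      _ ≤ q.2 := snd_le_of_mem_segment_of_fst_eq (on_line r hr) (on_line t ⟨hst.le, le_rfl⟩)
          hu hr.2 (htq.trans_le hqu) hq hq' hq'q.symm

/-- If a point `u` above `T` with `x(u) ≥ x(v')` sees both endpoints of an edge
`e = vv'` of `T` (with `x(v) < x(v')`), then `u` sees every point of `e`. -/
theorem stmt3 (a b : ℝ) (f : ℝ → ℝ) (s t m c : ℝ)
    (hst : s < t) (hs : s ∈ Set.Icc a b) (ht : t ∈ Set.Icc a b)
    (haff : ∀ r ∈ Set.Icc s t, f r = m * r + c)
    (u : ℝ × ℝ) (hu : u.1 ∈ Set.Icc a b → f u.1 ≤ u.2) (hur : t ≤ u.1)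
    (hv : Vis a b f (s, f s) u) (hv' : Vis a b f (t, f t) u) :
    ∀ r ∈ Set.Icc s t, Vis a b f (r, f r) u :=
  stmt3_general a b f s t m c hst ht haff u hur hv hv'
end

section
/- Let T be the graph of a piecewise linear function f and let e be a non-vertical edge of T. A point u lying above T sees every point of e only if u lies on or above the line extending e. -/
open Set

/-- A point `u` above `T` sees every point of a non-vertical edge `e` of `T`
only if `u` lies on or above the line extending `e`. -/
theorem stmt4 (a b : ℝ) (f : ℝ → ℝ) (s t m c : ℝ)
    (hst : s < t) (hs : s ∈ Set.Icc a b) (ht : t ∈ Set.Icc a b)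
    (haff : ∀ r ∈ Set.Icc s t, f r = m * r + c)
    (u : ℝ × ℝ) (hu : u.1 ∈ Set.Icc a b → f u.1 ≤ u.2)
    (hfull : ∀ r ∈ Set.Icc s t, Vis a b f (r, f r) u) :
    m * u.1 + c ≤ u.2 := by
  obtain ⟨ha1, hb1⟩ := hs
  obtain ⟨ha2, hb2⟩ := ht
  rcases lt_or_ge u.1 s with h1 | h1
  · -- u.1 < s : use segment from (t, f t) to u, point at x = s
    set l : ℝ := (t - s) / (t - u.1) with hl
    have hden : 0 < t - u.1 := by linarith
    have hl0 : 0 < l := div_pos (by linarith) hden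
    have hl1 : l < 1 := by
      rw [hl, div_lt_one hden]; linarith
    have hq1 : (1 - l) * t + l * u.1 = s := by
      rw [hl]; field_simp [hden.ne']; ring
    have hmem : ((1 - l) * t + l * u.1, (1 - l) * f t + l * u.2) ∈
        segment ℝ ((t : ℝ), f t) u := by
      refine ⟨1 - l, l, by linarith, by linarith, by ring, ?_⟩
      simp [Prod.ext_iff, Prod.smul_def, smul_eq_mul]
    have hv := hfull t ⟨le_of_lt hst, le_refl t⟩ _ hmem
        (by rw [hq1]; exact ⟨ha1, hb1⟩)
    simp only at hv
    rw [hq1] at hv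
    have hfs : f s = m * s + c := haff s ⟨le_refl s, le_of_lt hst⟩
    have hft : f t = m * t + c := haff t ⟨le_of_lt hst, le_refl t⟩
    rw [hfs, hft] at hv
    have : (1 - l) * t + l * u.1 = s := hq1
    have hm : m * ((1 - l) * t + l * u.1) = m * s := by rw [hq1]
    have key : l * (m * u.1 + c) ≤ l * u.2 := by nlinarith [hv, hm]
    exact le_of_mul_le_mul_left key hl0
  · rcases le_or_gt u.1 t with h2 | h2
    · -- s ≤ u.1 ≤ t
      have hfu : f u.1 = m * u.1 + c := haff u.1 ⟨h1, h2⟩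
      have := hu ⟨by linarith, by linarith⟩
      linarith [this, hfu.symm.le]
    · -- u.1 > t : use segment from (s, f s) to u, point at x = t
      set l : ℝ := (t - s) / (u.1 - s) with hl
      have hden : 0 < u.1 - s := by linarith
      have hl0 : 0 < l := div_pos (by linarith) hden
      have hl1 : l < 1 := by
        rw [hl, div_lt_one hden]; linarith
      have hq1 : (1 - l) * s + l * u.1 = t := by
        rw [hl]; field_simp [hden.ne']; ring
      have hmem : ((1 - l) * s + l * u.1, (1 - l) * f s + l * u.2) ∈
          segment ℝ ((s : ℝ), f s) u := by
        refine ⟨1 - l, l, by linarith, by linarith, by ring, ?_⟩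
        simp [Prod.ext_iff, Prod.smul_def, smul_eq_mul]
      have hv := hfull s ⟨le_refl s, le_of_lt hst⟩ _ hmem
          (by rw [hq1]; exact ⟨ha2, hb2⟩)
      simp only at hv
      rw [hq1] at hv
      have hfs : f s = m * s + c := haff s ⟨le_refl s, le_of_lt hst⟩
      have hft : f t = m * t + c := haff t ⟨le_of_lt hst, le_refl t⟩
      rw [hfs, hft] at hv
      have hm : m * ((1 - l) * s + l * u.1) = m * t := by rw [hq1]
      have key : l * (m * u.1 + c) ≤ l * u.2 := by nlinarith [hv, hm]
      exact le_of_mul_le_mul_left key hl0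
end

section
/- Let T be the graph of a piecewise linear function f with edges e_1, ..., e_{n-1}. A point u lying above T sees every point of T if and only if u belongs to the intersection of the upper half-planes e_i⁺ over all edges e_i of T. -/
open Set

/-- An x-monotone polygonal terrain: vertices `x 0 < x 1 < ⋯ < x N` on the x-axis,
heights given by `f`, which is affine with slope `m i` and intercept `c i` on the
`i`-th edge. -/
structure Terrain where
  N : ℕ
  hN : 1 ≤ N
  x : Fin (N + 1) → ℝ
  hx : StrictMono x
  f : ℝ → ℝ
  m : Fin N → ℝ
  c : Fin N → ℝ
  haff : ∀ i : Fin N, ∀ t ∈ Set.Icc (x i.castSucc) (x i.succ), f t = m i * t + c i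

/-- Left endpoint of the domain of the terrain. -/
def Terrain.a (T : Terrain) : ℝ := T.x 0

/-- Right endpoint of the domain of the terrain. -/
def Terrain.b (T : Terrain) : ℝ := T.x (Fin.last T.N)

/-- Visibility: the segment from terrain point `p` to guard `u` stays on or above
the terrain. -/
def Terrain.Vis (T : Terrain) (p u : ℝ × ℝ) : Prop :=
  ∀ q ∈ segment ℝ p u, q.1 ∈ Set.Icc T.a T.b → T.f q.1 ≤ q.2

/-- Full visibility of the `i`-th edge from the point `u`. -/
def Terrain.EdgeVis (T : Terrain) (i : Fin T.N) (u : ℝ × ℝ) : Prop :=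
  ∀ t ∈ Set.Icc (T.x i.castSucc) (T.x i.succ), T.Vis (t, T.f t) u

lemma affine_bound {A B α β x v : ℝ} (h1 : α ≤ x) (h2 : x ≤ β)
    (hα : v ≤ A*α+B) (hβ : v ≤ A*β+B) : v ≤ A*x+B := by
  rcases le_total A 0 with hA | hA
  · nlinarith
  · nlinarith

lemma Terrain.mem_ab (T : Terrain) (j : Fin (T.N+1)) : T.x j ∈ Icc T.a T.b :=
  ⟨T.hx.monotone (Fin.zero_le j), T.hx.monotone (Fin.le_last j)⟩

lemma Terrain.exists_edge (T : Terrain) {y : ℝ} (hy : y ∈ Icc T.a T.b) :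
    ∃ i : Fin T.N, y ∈ Icc (T.x i.castSucc) (T.x i.succ) := by
  classical
  set S : Finset (Fin (T.N+1)) := Finset.univ.filter (fun j => T.x j ≤ y) with hS
  have hSne : S.Nonempty := ⟨0, by simp [hS]; exact hy.1⟩
  obtain ⟨j, hjS, hjmax⟩ := S.exists_max_image id hSne
  have hjle : T.x j ≤ y := by simpa [hS] using hjS
  by_cases hj : j.val < T.N
  · refine ⟨⟨j.val, hj⟩, ?_, ?_⟩
    · simpa [Fin.castSucc] using hjle
    · by_contra hcon
      push_neg at hcon
      have hmem : (⟨j.val + 1, by omega⟩ : Fin (T.N+1)) ∈ S := by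
        simp [hS]; exact le_of_lt hcon
      have := hjmax _ hmem
      rw [Fin.le_def] at this
      simp only [id] at this
      omega
  · have hjlast : j = Fin.last T.N := by
      apply Fin.ext; simp [Fin.last]; omega
    have hN := T.hN
    refine ⟨⟨T.N - 1, by omega⟩, ?_, ?_⟩
    · have : (⟨T.N - 1, by omega⟩ : Fin T.N).castSucc ≤ j := by
        refine Fin.le_def.mpr ?_
        simp only [Fin.coe_castSucc]
        omega
      calc T.x _ ≤ T.x j := T.hx.monotone this
        _ ≤ y := hjle
    · have hsucc : (⟨T.N - 1, by omega⟩ : Fin T.N).succ = Fin.last T.N := by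
        apply Fin.ext; simp [Fin.last]; omega
      rw [hsucc]
      exact hy.2

lemma core_right (T : Terrain) (u : ℝ × ℝ)
    (hu : u.1 ∈ Icc T.a T.b → T.f u.1 ≤ u.2)
    (hlines : ∀ i : Fin T.N, T.m i * u.1 + T.c i ≤ u.2)
    {t z : ℝ} (ht : t ∈ Icc T.a T.b) (hlt : t < u.1)
    (hz1 : t ≤ z) (hz2 : z ≤ u.1) (hzab : z ∈ Icc T.a T.b) :
    0 ≤ (u.1 - z) * T.f t + (z - t) * u.2 - (u.1 - t) * T.f z := by
  classical
  by_contra hneg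
  push_neg at hneg
  set H : ℝ → ℝ := fun x => (u.1 - x) * T.f t + (x - t) * u.2 - (u.1 - t) * T.f x with hH
  have hd : (0:ℝ) < u.1 - t := by linarith
  have hHt : H t = 0 := by simp only [hH]; ring
  have hHu : u.1 ∈ Icc T.a T.b → 0 ≤ H u.1 := by
    intro h
    have h2 := hu h
    simp only [hH]
    nlinarith
  set r : ℝ := min u.1 T.b with hr
  have hzr : z ≤ r := le_min hz2 hzab.2
  have htr : t ≤ r := le_trans hz1 hzr
  have hneg' : H z < 0 := hneg
  set V : Finset (Fin (T.N+1)) :=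
    Finset.univ.filter (fun j => T.x j ∈ Icc t r ∧ H (T.x j) < 0) with hV
  have hmemV : ∀ j : Fin (T.N+1), T.x j ∈ Icc t r → H (T.x j) < 0 → j ∈ V := by
    intro j h1 h2
    simp only [hV, Finset.mem_filter, Finset.mem_univ, true_and]
    exact ⟨h1, h2⟩
  have hform : ∀ i : Fin T.N, ∀ w ∈ Icc (T.x i.castSucc) (T.x i.succ),
      H w = (u.2 - T.f t - (u.1 - t) * T.m i) * w
        + (u.1 * T.f t - t * u.2 - (u.1 - t) * T.c i) := by
    intro i w hw
    have haf := T.haff i w hw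
    simp only [hH]
    rw [haf]; ring
  have hVne : V.Nonempty := by
    obtain ⟨i, hiz⟩ := T.exists_edge hzab
    have hαz : max t (T.x i.castSucc) ≤ z := max_le hz1 hiz.1
    have hzβ : z ≤ min r (T.x i.succ) := le_min hzr hiz.2
    have hαe : max t (T.x i.castSucc) ∈ Icc (T.x i.castSucc) (T.x i.succ) :=
      ⟨le_max_right _ _, le_trans hαz (le_trans hzβ (min_le_right _ _))⟩
    have hβe : min r (T.x i.succ) ∈ Icc (T.x i.castSucc) (T.x i.succ) :=
      ⟨le_trans hαe.1 (le_trans hαz hzβ), min_le_right _ _⟩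
    have hcases : H (max t (T.x i.castSucc)) < 0 ∨ H (min r (T.x i.succ)) < 0 := by
      by_contra hc
      push_neg at hc
      have h1 : (0:ℝ) ≤ (u.2 - T.f t - (u.1 - t) * T.m i) * (max t (T.x i.castSucc))
          + (u.1 * T.f t - t * u.2 - (u.1 - t) * T.c i) := by
        rw [← hform i _ hαe]; exact hc.1
      have h2 : (0:ℝ) ≤ (u.2 - T.f t - (u.1 - t) * T.m i) * (min r (T.x i.succ))
          + (u.1 * T.f t - t * u.2 - (u.1 - t) * T.c i) := by
        rw [← hform i _ hβe]; exact hc.2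
      have h3 := affine_bound hαz hzβ h1 h2
      rw [← hform i z hiz] at h3
      linarith
    rcases hcases with hα | hβ
    · rcases le_total (T.x i.castSucc) t with hc | hc
      · rw [max_eq_left hc, hHt] at hα; linarith
      · rw [max_eq_right hc] at hα
        exact ⟨i.castSucc, hmemV _ ⟨hc, le_trans hiz.1 hzr⟩ hα⟩
    · rcases le_total (T.x i.succ) r with hc | hc
      · rw [min_eq_right hc] at hβ
        exact ⟨i.succ, hmemV _ ⟨le_trans hz1 (le_trans (le_min hzr hiz.2) (min_le_right _ _)), hc⟩ hβ⟩
      · rw [min_eq_left hc] at hβ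
        rcases le_total u.1 T.b with hub | hub
        · rw [hr, min_eq_left hub] at hβ
          have : u.1 ∈ Icc T.a T.b := ⟨le_trans ht.1 (le_of_lt hlt), hub⟩
          linarith [hHu this]
        · have hrb : r = T.b := by rw [hr, min_eq_right hub]
          have hxl : T.x (Fin.last T.N) = r := by rw [hrb]; rfl
          refine ⟨Fin.last T.N, hmemV _ ⟨?_, ?_⟩ ?_⟩
          · rw [hxl]; exact htr
          · rw [hxl]
          · rw [hxl]; exact hβ
  obtain ⟨j, hjV, hjmin⟩ := V.exists_min_image (fun j => H (T.x j)) hVne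
  simp only [hV, Finset.mem_filter, Finset.mem_univ, true_and] at hjV
  obtain ⟨hjIcc, hjneg⟩ := hjV
  have htlt : t < T.x j := by
    rcases lt_or_eq_of_le hjIcc.1 with h | h
    · exact h
    · exfalso; rw [← h, hHt] at hjneg; linarith
  have hj1 : 1 ≤ j.val := by
    rcases Nat.eq_zero_or_pos j.val with h0 | h1
    · exfalso
      have hj0 : j = 0 := by apply Fin.ext; simp [h0]
      rw [hj0] at htlt
      have hta := ht.1
      simp only [Terrain.a] at hta
      linarith
    · exact h1
  have hjN : j.val ≤ T.N := by omega
  set i : Fin T.N := ⟨j.val - 1, by omega⟩ with hi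
  have hisucc : i.succ = j := Fin.ext (by simp [hi, Fin.succ]; omega)
  have hicast : T.x i.castSucc < T.x j := by
    apply T.hx
    rw [Fin.lt_def]
    rw [Fin.coe_castSucc, ← hisucc, Fin.val_succ]
    omega
  have hl_lt : max t (T.x i.castSucc) < T.x j := max_lt htlt hicast
  have hl_edge : max t (T.x i.castSucc) ∈ Icc (T.x i.castSucc) (T.x i.succ) :=
    ⟨le_max_right _ _, by rw [hisucc]; exact le_of_lt hl_lt⟩
  have hj_edge : T.x j ∈ Icc (T.x i.castSucc) (T.x i.succ) :=
    ⟨le_of_lt hicast, by rw [hisucc]⟩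
  have hHl : H (T.x j) ≤ H (max t (T.x i.castSucc)) := by
    rcases le_total (T.x i.castSucc) t with hc | hc
    · rw [max_eq_left hc, hHt]; linarith
    · rw [max_eq_right hc]
      by_cases hneg2 : H (T.x i.castSucc) < 0
      · exact hjmin _ (hmemV _ ⟨hc, le_trans (le_of_lt hicast) hjIcc.2⟩ hneg2)
      · push_neg at hneg2; linarith
  have hfl := hform i _ hl_edge
  have hfj := hform i _ hj_edge
  have hA : u.2 - T.f t - (u.1 - t) * T.m i ≤ 0 := by nlinarith [hHl, hl_lt]
  have hxju : T.x j < u.1 := by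
    rcases lt_or_eq_of_le (le_trans hjIcc.2 (min_le_left _ _)) with h | h
    · exact h
    · exfalso
      have hab : u.1 ∈ Icc T.a T.b := h ▸ T.mem_ab j
      have := hHu hab
      rw [← h] at this
      linarith
  have hfinal : (u.2 - T.f t - (u.1 - t) * T.m i) * u.1
      + (u.1 * T.f t - t * u.2 - (u.1 - t) * T.c i) < 0 := by nlinarith
  have hpos : 0 ≤ (u.2 - T.f t - (u.1 - t) * T.m i) * u.1
      + (u.1 * T.f t - t * u.2 - (u.1 - t) * T.c i) := by nlinarith [hlines i]
  linarith

lemma core_left (T : Terrain) (u : ℝ × ℝ)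
    (hu : u.1 ∈ Icc T.a T.b → T.f u.1 ≤ u.2)
    (hlines : ∀ i : Fin T.N, T.m i * u.1 + T.c i ≤ u.2)
    {t z : ℝ} (ht : t ∈ Icc T.a T.b) (hlt : u.1 < t)
    (hz1 : u.1 ≤ z) (hz2 : z ≤ t) (hzab : z ∈ Icc T.a T.b) :
    0 ≤ (z - u.1) * T.f t + (t - z) * u.2 - (t - u.1) * T.f z := by
  classical
  by_contra hneg
  push_neg at hneg
  set H : ℝ → ℝ := fun x => (x - u.1) * T.f t + (t - x) * u.2 - (t - u.1) * T.f x with hH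
  have hd : (0:ℝ) < t - u.1 := by linarith
  have hHt : H t = 0 := by simp only [hH]; ring
  have hHu : u.1 ∈ Icc T.a T.b → 0 ≤ H u.1 := by
    intro h
    have h2 := hu h
    simp only [hH]
    nlinarith
  set r : ℝ := max u.1 T.a with hr
  have hzr : r ≤ z := max_le hz1 hzab.1
  have htr : r ≤ t := le_trans hzr hz2
  have hneg' : H z < 0 := hneg
  set V : Finset (Fin (T.N+1)) :=
    Finset.univ.filter (fun j => T.x j ∈ Icc r t ∧ H (T.x j) < 0) with hV
  have hmemV : ∀ j : Fin (T.N+1), T.x j ∈ Icc r t → H (T.x j) < 0 → j ∈ V := by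
    intro j h1 h2
    simp only [hV, Finset.mem_filter, Finset.mem_univ, true_and]
    exact ⟨h1, h2⟩
  have hform : ∀ i : Fin T.N, ∀ w ∈ Icc (T.x i.castSucc) (T.x i.succ),
      H w = (T.f t - u.2 - (t - u.1) * T.m i) * w
        + (t * u.2 - u.1 * T.f t - (t - u.1) * T.c i) := by
    intro i w hw
    have haf := T.haff i w hw
    simp only [hH]
    rw [haf]; ring
  have hVne : V.Nonempty := by
    obtain ⟨i, hiz⟩ := T.exists_edge hzab
    have hαz : max r (T.x i.castSucc) ≤ z := max_le hzr hiz.1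
    have hzβ : z ≤ min t (T.x i.succ) := le_min hz2 hiz.2
    have hαe : max r (T.x i.castSucc) ∈ Icc (T.x i.castSucc) (T.x i.succ) :=
      ⟨le_max_right _ _, le_trans hαz (le_trans hzβ (min_le_right _ _))⟩
    have hβe : min t (T.x i.succ) ∈ Icc (T.x i.castSucc) (T.x i.succ) :=
      ⟨le_trans hαe.1 (le_trans hαz hzβ), min_le_right _ _⟩
    have hcases : H (max r (T.x i.castSucc)) < 0 ∨ H (min t (T.x i.succ)) < 0 := by
      by_contra hc
      push_neg at hc
      have h1 : (0:ℝ) ≤ (T.f t - u.2 - (t - u.1) * T.m i) * (max r (T.x i.castSucc))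
          + (t * u.2 - u.1 * T.f t - (t - u.1) * T.c i) := by
        rw [← hform i _ hαe]; exact hc.1
      have h2 : (0:ℝ) ≤ (T.f t - u.2 - (t - u.1) * T.m i) * (min t (T.x i.succ))
          + (t * u.2 - u.1 * T.f t - (t - u.1) * T.c i) := by
        rw [← hform i _ hβe]; exact hc.2
      have h3 := affine_bound hαz hzβ h1 h2
      rw [← hform i z hiz] at h3
      linarith
    rcases hcases with hα | hβ
    · rcases le_total (T.x i.castSucc) r with hc | hc
      · rw [max_eq_left hc] at hα
        rcases le_total T.a u.1 with hua | hua
        · rw [hr, max_eq_left hua] at hα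
          have : u.1 ∈ Icc T.a T.b := ⟨hua, le_trans (le_of_lt hlt) ht.2⟩
          linarith [hHu this]
        · have hra : r = T.a := by rw [hr, max_eq_right hua]
          have hxl : T.x (0 : Fin (T.N+1)) = r := by rw [hra]; rfl
          refine ⟨0, hmemV _ ⟨?_, ?_⟩ ?_⟩
          · rw [hxl]
          · rw [hxl]; exact htr
          · rw [hxl]; exact hα
      · rw [max_eq_right hc] at hα
        exact ⟨i.castSucc, hmemV _ ⟨hc, le_trans hiz.1 hz2⟩ hα⟩
    · rcases le_total t (T.x i.succ) with hc | hc
      · rw [min_eq_left hc, hHt] at hβ; linarith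
      · rw [min_eq_right hc] at hβ
        exact ⟨i.succ, hmemV _ ⟨le_trans hzr hiz.2, hc⟩ hβ⟩
  obtain ⟨j, hjV, hjmin⟩ := V.exists_min_image (fun j => H (T.x j)) hVne
  simp only [hV, Finset.mem_filter, Finset.mem_univ, true_and] at hjV
  obtain ⟨hjIcc, hjneg⟩ := hjV
  have htlt : T.x j < t := by
    rcases lt_or_eq_of_le hjIcc.2 with h | h
    · exact h
    · exfalso; rw [h, hHt] at hjneg; linarith
  have hjN : j.val < T.N := by
    have hxb : T.x j < T.x (Fin.last T.N) := lt_of_lt_of_le htlt ht.2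
    have := T.hx.lt_iff_lt.mp hxb
    rw [Fin.lt_def] at this
    simpa [Fin.last] using this
  set i : Fin T.N := ⟨j.val, hjN⟩ with hi
  have hicast : i.castSucc = j := Fin.ext (by simp [hi])
  have hsucc_gt : T.x j < T.x i.succ := by
    apply T.hx
    rw [Fin.lt_def]
    simp [hi, Fin.succ]
  have hl_gt : T.x j < min t (T.x i.succ) := lt_min htlt hsucc_gt
  have hl_edge : min t (T.x i.succ) ∈ Icc (T.x i.castSucc) (T.x i.succ) :=
    ⟨by rw [hicast]; exact le_of_lt hl_gt, min_le_right _ _⟩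
  have hj_edge : T.x j ∈ Icc (T.x i.castSucc) (T.x i.succ) :=
    ⟨by rw [hicast], le_of_lt hsucc_gt⟩
  have hHl : H (T.x j) ≤ H (min t (T.x i.succ)) := by
    rcases le_total t (T.x i.succ) with hc | hc
    · rw [min_eq_left hc, hHt]; linarith
    · rw [min_eq_right hc]
      by_cases hneg2 : H (T.x i.succ) < 0
      · exact hjmin _ (hmemV _ ⟨le_trans hjIcc.1 (le_of_lt hsucc_gt), hc⟩ hneg2)
      · push_neg at hneg2; linarith
  have hfl := hform i _ hl_edge
  have hfj := hform i _ hj_edge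
  have hA : 0 ≤ T.f t - u.2 - (t - u.1) * T.m i := by nlinarith [hHl, hl_gt]
  have hxju : u.1 < T.x j := by
    rcases lt_or_eq_of_le (le_trans (le_max_left _ _) hjIcc.1) with h | h
    · exact h
    · exfalso
      have hab : u.1 ∈ Icc T.a T.b := h ▸ T.mem_ab j
      have := hHu hab
      rw [h] at this
      linarith
  have hfinal : (T.f t - u.2 - (t - u.1) * T.m i) * u.1
      + (t * u.2 - u.1 * T.f t - (t - u.1) * T.c i) < 0 := by nlinarith
  have hpos : 0 ≤ (T.f t - u.2 - (t - u.1) * T.m i) * u.1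
      + (t * u.2 - u.1 * T.f t - (t - u.1) * T.c i) := by nlinarith [hlines i]
  linarith

/-- A point `u` above `T` sees every point of `T` iff `u` belongs to the
intersection of the upper half-planes bounded by the lines extending the edges. -/
theorem stmt5 (T : Terrain) (u : ℝ × ℝ)
    (hu : u.1 ∈ Set.Icc T.a T.b → T.f u.1 ≤ u.2) :
    (∀ t ∈ Set.Icc T.a T.b, T.Vis (t, T.f t) u) ↔
      ∀ i : Fin T.N, T.m i * u.1 + T.c i ≤ u.2 := by
  constructor
  · intro hvis i
    by_contra hc
    push_neg at hc
    have hL : T.x i.castSucc < T.x i.succ := T.hx Fin.castSucc_lt_succ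
    have hLab := T.mem_ab i.castSucc
    have hRab := T.mem_ab i.succ
    have hfL : T.f (T.x i.castSucc) = T.m i * T.x i.castSucc + T.c i :=
      T.haff i _ ⟨le_refl _, le_of_lt hL⟩
    have hfR : T.f (T.x i.succ) = T.m i * T.x i.succ + T.c i :=
      T.haff i _ ⟨le_of_lt hL, le_refl _⟩
    rcases lt_or_ge u.1 (T.x i.castSucc) with h1 | h1
    · -- u strictly left of the edge; look at the left endpoint from the right endpoint
      have hden : (0:ℝ) < T.x i.succ - u.1 := by linarith
      set s : ℝ := (T.x i.succ - T.x i.castSucc) / (T.x i.succ - u.1) with hs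
      have hspos : 0 < s := div_pos (by linarith) hden
      have hs1 : s ≤ 1 := by rw [div_le_one hden]; linarith
      have hmul : s * (T.x i.succ - u.1) = T.x i.succ - T.x i.castSucc := by
        rw [hs]; field_simp
      have hq1 : (1-s)*(T.x i.succ) + s*u.1 = T.x i.castSucc := by linarith [hmul]
      have hqmem : ((1-s)*(T.x i.succ) + s*u.1, (1-s)*(T.f (T.x i.succ)) + s*u.2)
          ∈ segment ℝ (T.x i.succ, T.f (T.x i.succ)) u := by
        rw [segment_eq_image]
        exact ⟨s, ⟨le_of_lt hspos, hs1⟩, by simp [Prod.ext_iff]⟩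
      have hvq : T.f ((1-s)*(T.x i.succ) + s*u.1) ≤ (1-s)*(T.f (T.x i.succ)) + s*u.2 :=
        hvis (T.x i.succ) hRab _ hqmem
          (by show ((1-s)*(T.x i.succ) + s*u.1) ∈ Icc T.a T.b; rw [hq1]; exact hLab)
      rw [hq1, hfL, hfR] at hvq
      have hq1m : T.m i * ((1-s)*(T.x i.succ) + s*u.1) = T.m i * T.x i.castSucc := by
        rw [hq1]
      have key : 0 < s * (T.m i * u.1 + T.c i - u.2) := mul_pos hspos (by linarith)
      nlinarith [hvq, hq1m, key]
    rcases le_or_gt u.1 (T.x i.succ) with h2 | h2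
    · -- u above the edge interval
      have hfu : T.f u.1 = T.m i * u.1 + T.c i := T.haff i u.1 ⟨h1, h2⟩
      have huab : u.1 ∈ Icc T.a T.b := ⟨le_trans hLab.1 h1, le_trans h2 hRab.2⟩
      linarith [hu huab]
    · -- u strictly right of the edge
      have hden : (0:ℝ) < u.1 - T.x i.castSucc := by linarith
      set s : ℝ := (T.x i.succ - T.x i.castSucc) / (u.1 - T.x i.castSucc) with hs
      have hspos : 0 < s := div_pos (by linarith) hden
      have hs1 : s ≤ 1 := by rw [div_le_one hden]; linarith
      have hmul : s * (u.1 - T.x i.castSucc) = T.x i.succ - T.x i.castSucc := by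
        rw [hs]; field_simp
      have hq1 : (1-s)*(T.x i.castSucc) + s*u.1 = T.x i.succ := by linarith [hmul]
      have hqmem : ((1-s)*(T.x i.castSucc) + s*u.1, (1-s)*(T.f (T.x i.castSucc)) + s*u.2)
          ∈ segment ℝ (T.x i.castSucc, T.f (T.x i.castSucc)) u := by
        rw [segment_eq_image]
        exact ⟨s, ⟨le_of_lt hspos, hs1⟩, by simp [Prod.ext_iff]⟩
      have hvq : T.f ((1-s)*(T.x i.castSucc) + s*u.1) ≤ (1-s)*(T.f (T.x i.castSucc)) + s*u.2 :=
        hvis (T.x i.castSucc) hLab _ hqmem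
          (by show ((1-s)*(T.x i.castSucc) + s*u.1) ∈ Icc T.a T.b; rw [hq1]; exact hRab)
      rw [hq1, hfL, hfR] at hvq
      have hq1m : T.m i * ((1-s)*(T.x i.castSucc) + s*u.1) = T.m i * T.x i.succ := by
        rw [hq1]
      have key : 0 < s * (T.m i * u.1 + T.c i - u.2) := mul_pos hspos (by linarith)
      nlinarith [hvq, hq1m, key]
  · intro h t ht q hq hq1ab
    rw [segment_eq_image] at hq
    obtain ⟨s, ⟨hs0, hs1⟩, rfl⟩ := hq
    have hq1 : (((1-s) • ((t : ℝ), T.f t) + s • u)).1 = (1-s)*t + s*u.1 := by simp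
    have hq2 : (((1-s) • ((t : ℝ), T.f t) + s • u)).2 = (1-s)*(T.f t) + s*u.2 := by simp
    rw [hq1] at hq1ab
    rw [hq1, hq2]
    rcases lt_trichotomy t u.1 with hlt | heq | hgt
    · have hz1 : t ≤ (1-s)*t + s*u.1 := by nlinarith
      have hz2 : (1-s)*t + s*u.1 ≤ u.1 := by nlinarith
      have hcore := core_right T u hu h ht hlt hz1 hz2 hq1ab
      have hd : (0:ℝ) < u.1 - t := by linarith
      nlinarith [hcore, hd]
    · have hz : (1-s)*t + s*u.1 = t := by rw [← heq]; ring
      rw [hz]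
      have hu2 : T.f u.1 ≤ u.2 := hu (heq ▸ ht)
      rw [← heq] at hu2
      nlinarith [hs0, hu2]
    · have hz1 : u.1 ≤ (1-s)*t + s*u.1 := by nlinarith
      have hz2 : (1-s)*t + s*u.1 ≤ t := by nlinarith
      have hcore := core_left T u hu h ht hgt hz1 hz2 hq1ab
      have hd : (0:ℝ) < t - u.1 := by linarith
      nlinarith [hcore, hd]
end

section
/- Let T be an x-monotone terrain with n ≥ 2 vertices and suppose g₁ and g₂ are two guards on a horizontal line L(h) above T with x(g₁) < x(g₂) that together cover T. Then x(g₁) ≤ x(f(h)) where f(h) is the leftmost point among the rightmost placements F(e,h) over all edges e of T, where F(e,h) denotes the rightmost point on L(h) from which edge e is fully visible. -/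
open Set

/-!
For a terrain point `p` below `L(h)`, the points of `L(h)` that see `p` form an interval: if
`s` lies between `p.1` and `s'`, every point of the sight line from `p` to `(s, h)` lies
vertically above a point of the sight line from `p` to `(s', h)`. Hence if `g₁` were to the
right of `F(e,h)`, every point of `e` seen by `g₂` would also be seen by `g₁`, which lies
between `F(e,h)` and `g₂`; so `g₁` would see all of `e`, contradicting the maximality of
`F(e,h)`.
-/

theorem exists_mem_segment_fst_eq_snd_le {t y₀ h s s' : ℝ} (hy₀ : y₀ ≤ h)
    (hs : s ∈ segment ℝ t s') {q : ℝ × ℝ} (hq : q ∈ segment ℝ (t, y₀) (s, h)) :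
    ∃ q' ∈ segment ℝ (t, y₀) (s', h), q'.1 = q.1 ∧ q'.2 ≤ q.2 := by
  rw [segment_eq_image'] at hs hq ⊢
  obtain ⟨c, ⟨hc₀, hc₁⟩, rfl⟩ := hs
  obtain ⟨θ, ⟨hθ₀, hθ₁⟩, rfl⟩ := hq
  refine ⟨_, ⟨θ * c, ⟨mul_nonneg hθ₀ hc₀, mul_le_one₀ hθ₁ hc₀ hc₁⟩, rfl⟩, ?_, ?_⟩
  · simp only [Prod.fst_add, Prod.smul_fst, Prod.fst_sub, smul_eq_mul]
    ring
  · simp only [Prod.snd_add, Prod.smul_snd, Prod.snd_sub, smul_eq_mul]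
    nlinarith [mul_nonneg hθ₀ (sub_nonneg.2 hc₁), sub_nonneg.2 hy₀]

namespace Terrain

variable (T : Terrain)

theorem edge_subset_Icc (i : Fin T.N) :
    Icc (T.x i.castSucc) (T.x i.succ) ⊆ Icc T.a T.b :=
  Icc_subset_Icc (T.hx.monotone (Fin.zero_le _)) (T.hx.monotone (Fin.le_last _))

theorem vis_of_vis_of_mem_segment {t h s s' : ℝ} (hth : T.f t ≤ h)
    (hs : s ∈ segment ℝ t s') (hv : T.Vis (t, T.f t) (s', h)) :
    T.Vis (t, T.f t) (s, h) := fun q hq hqab => by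
  obtain ⟨q', hq', hq'₁, hq'₂⟩ := exists_mem_segment_fst_eq_snd_le hth hs hq
  exact hq'₁ ▸ (hv q' hq' (hq'₁ ▸ hqab)).trans hq'₂

theorem ordConnected_setOf_vis {t h : ℝ} (hth : T.f t ≤ h) :
    {s | T.Vis (t, T.f t) (s, h)}.OrdConnected := by
  refine ⟨fun s₁ hs₁ s₂ hs₂ s ⟨hs₁s, hss₂⟩ => ?_⟩
  rcases le_total t s with hts | hst
  · exact T.vis_of_vis_of_mem_segment hth (Icc_subset_segment ⟨hts, hss₂⟩) hs₂
  · refine T.vis_of_vis_of_mem_segment hth ?_ hs₁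
    exact segment_symm ℝ s₁ t ▸ Icc_subset_segment ⟨hs₁s, hst⟩

end Terrain

/-- If two guards `g₁, g₂` on `L(h)` with `x(g₁) < x(g₂)` cover `T`, then
`x(g₁) ≤ x(f(h))`, where `f(h)` is the leftmost among the rightmost placements
`F(e,h)` over all edges `e`; i.e. `x(g₁) ≤ F(e,h)` for every edge `e`. -/
theorem stmt6 (T : Terrain) (h : ℝ)
    (hh : ∀ t ∈ Set.Icc T.a T.b, T.f t ≤ h)
    (F : Fin T.N → ℝ)
    (hFvis : ∀ i, T.EdgeVis i (F i, h))
    (hFmax : ∀ i, ∀ p : ℝ, T.EdgeVis i (p, h) → p ≤ F i)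
    (g₁ g₂ : ℝ × ℝ) (hg₁ : g₁.2 = h) (hg₂ : g₂.2 = h) (hg : g₁.1 < g₂.1)
    (hcover : ∀ t ∈ Set.Icc T.a T.b, T.Vis (t, T.f t) g₁ ∨ T.Vis (t, T.f t) g₂) :
    ∀ i : Fin T.N, g₁.1 ≤ F i := by
  intro i
  by_contra! hlt
  refine hlt.not_ge (hFmax i g₁.1 fun t ht => ?_)
  have htab := T.edge_subset_Icc i ht
  rcases hcover t htab with hv₁ | hv₂
  · rwa [← hg₁]
  · exact (T.ordConnected_setOf_vis (hh t htab)).out (hFvis i t ht) (by rwa [← hg₂])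
      ⟨hlt.le, hg.le⟩
end

section
/- Let T be an x-monotone terrain, h a height above T, f(h) the leftmost among the rightmost full-visibility placements F(e,h) over edges e of T. Then for any point u on L(h) with x(u) < x(f(h)), the set of points of T visible from u is a subset of the set of points of T visible from f(h). -/
/-!
If a point `p` below height `h` is visible from `(v, h)`, it is visible from every `(w, h)` with
`w` between `p.1` and `v`: each point of the segment from `p` to `(w, h)` lies vertically above a
point of the segment from `p` to `(v, h)`. A terrain point left of `f(h)` lies on some edge `e`,
which is fully visible from `F(e, h) ≥ f(h)`; a terrain point right of `f(h)` that is visible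
from `u < f(h)` is visible from `f(h)` as well.
-/

open Set

theorem exists_mem_segment_fst_eq_snd_le_s8 {p q : ℝ × ℝ} {v w h : ℝ} (hp : p.2 ≤ h)
    (hw : w ∈ uIcc p.1 v) (hq : q ∈ segment ℝ p (w, h)) :
    ∃ q' ∈ segment ℝ p (v, h), q'.1 = q.1 ∧ q'.2 ≤ q.2 := by
  rw [← segment_eq_uIcc, segment_eq_image] at hw
  rw [segment_eq_image] at hq
  obtain ⟨r, ⟨hr₀, hr₁⟩, rfl⟩ := hw
  obtain ⟨s, ⟨hs₀, hs₁⟩, rfl⟩ := hq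
  -- `q` is at parameter `s` towards `(w, h)`, i.e. at parameter `s * r` towards `(v, h)`.
  refine ⟨(1 - s * r) • p + (s * r) • (v, h), ?_, ?_, ?_⟩
  · rw [segment_eq_image]
    exact mem_image_of_mem _ ⟨mul_nonneg hs₀ hr₀, mul_le_one₀ hs₁ hr₀ hr₁⟩
  · simp only [Prod.fst_add, Prod.smul_fst, smul_eq_mul]
    ring
  · simp only [Prod.snd_add, Prod.smul_snd, smul_eq_mul]
    nlinarith [mul_nonneg hs₀ (sub_nonneg.2 hr₁)]

theorem Terrain.Vis.of_mem_uIcc {T : Terrain} {p : ℝ × ℝ} {v w h : ℝ} (hvis : T.Vis p (v, h))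
    (hp : p.2 ≤ h) (hw : w ∈ uIcc p.1 v) : T.Vis p (w, h) := by
  intro q hq hq₁
  obtain ⟨q', hq', hfst, hsnd⟩ := exists_mem_segment_fst_eq_snd_le_s8 hp hw hq
  calc T.f q.1 = T.f q'.1 := by rw [hfst]
    _ ≤ q'.2 := hvis q' hq' (hfst ▸ hq₁)
    _ ≤ q.2 := hsnd

theorem Terrain.exists_mem_edge (T : Terrain) {t : ℝ} (ht : t ∈ Icc T.a T.b) :
    ∃ i : Fin T.N, t ∈ Icc (T.x i.castSucc) (T.x i.succ) := by
  obtain ⟨k, hk, hmin⟩ := wellFounded_lt.has_min {k | t ≤ T.x k} ⟨Fin.last _, ht.2⟩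
  cases k using Fin.cases with
  | zero =>
    have ht₀ : t = T.x 0 := le_antisymm hk ht.1
    exact ⟨⟨0, T.hN⟩, ht₀.symm.le, ht₀ ▸ T.hx.monotone (Fin.zero_le _)⟩
  | succ i =>
    exact ⟨i, le_of_not_ge fun hi => hmin _ hi Fin.castSucc_lt_succ, hk⟩

theorem stmt8_general (T : Terrain) (h : ℝ)
    (hh : ∀ t ∈ Set.Icc T.a T.b, T.f t ≤ h)
    (F : Fin T.N → ℝ)
    (hFvis : ∀ i, T.EdgeVis i (F i, h))
    (fh : ℝ) (hfh₁ : ∀ i, fh ≤ F i)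
    (u : ℝ) (hu : u < fh) :
    ∀ t ∈ Set.Icc T.a T.b, T.Vis (t, T.f t) (u, h) → T.Vis (t, T.f t) (fh, h) := by
  intro t ht hvis
  rcases le_or_gt t fh with htf | hft
  · obtain ⟨i, hi⟩ := T.exists_mem_edge ht
    exact (hFvis i t hi).of_mem_uIcc (hh t ht) (mem_uIcc_of_le htf (hfh₁ i))
  · exact hvis.of_mem_uIcc (hh t ht) (mem_uIcc_of_ge hu.le hft.le)

/-- For any point `u` on `L(h)` with `x(u) < x(f(h))`, the set of points of `T`
visible from `u` is contained in the set of points of `T` visible from `f(h)`. -/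
theorem stmt8 (T : Terrain) (h : ℝ)
    (hh : ∀ t ∈ Set.Icc T.a T.b, T.f t ≤ h)
    (F : Fin T.N → ℝ)
    (hFvis : ∀ i, T.EdgeVis i (F i, h))
    (hFmax : ∀ i, ∀ p : ℝ, T.EdgeVis i (p, h) → p ≤ F i)
    (fh : ℝ) (hfh₁ : ∀ i, fh ≤ F i) (hfh₂ : ∃ i, fh = F i)
    (u : ℝ) (hu : u < fh) :
    ∀ t ∈ Set.Icc T.a T.b, T.Vis (t, T.f t) (u, h) → T.Vis (t, T.f t) (fh, h) :=
  stmt8_general T h hh F hFvis fh hfh₁ u hu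
end

section
/- Let T be an x-monotone terrain and let e be an edge of T whose line extension has negative slope (y decreases as x increases). For a point u above T to the right of e that sees every point of e, u must lie on or above the line extending e; moreover the set of such points u on a fixed horizontal line L(h) from which e is fully visible is an interval (connected). -/
open Set

/-- For an edge `e` of negative slope: (1) any point `u` above `T` to the right of
`e` that sees all of `e` lies on or above the line extending `e`; (2) the set of
points of a fixed horizontal line `L(h)` from which `e` is fully visible is an
interval (convex). -/
theorem stmt12 (T : Terrain) (i : Fin T.N) (hm : T.m i < 0) (h : ℝ)
    (hh : ∀ t ∈ Set.Icc T.a T.b, T.f t ≤ h) :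
    (∀ u : ℝ × ℝ, (u.1 ∈ Set.Icc T.a T.b → T.f u.1 ≤ u.2) → T.x i.succ ≤ u.1 →
        T.EdgeVis i u → T.m i * u.1 + T.c i ≤ u.2) ∧
    (∀ p₁ p₂ p₃ : ℝ, p₁ ≤ p₂ → p₂ ≤ p₃ →
        T.EdgeVis i (p₁, h) → T.EdgeVis i (p₃, h) → T.EdgeVis i (p₂, h)) := by

  have ht01 : T.x i.castSucc < T.x i.succ := T.hx Fin.castSucc_lt_succ
  have hal : T.a ≤ T.x i.castSucc := T.hx.monotone (Fin.zero_le _)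
  have hbr : T.x i.succ ≤ T.b := T.hx.monotone (Fin.le_last _)
  constructor
  · intro u hu hright hvis
    rcases eq_or_lt_of_le hright with heq | hlt
    · have hu2 : T.f u.1 ≤ u.2 := hu ⟨by linarith, by linarith⟩
      have haf := T.haff i u.1 ⟨by linarith, by linarith⟩
      rw [haf] at hu2
      exact hu2
    · set t0 := T.x i.castSucc with ht0def
      set x1 := T.x i.succ with hx1def
      set s : ℝ := (x1 - t0) / (u.1 - t0) with hs
      have hs0 : 0 < s := div_pos (by linarith) (by linarith)
      have hs1 : s ≤ 1 := by rw [hs, div_le_one (by linarith)]; linarith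
      have hseq : s * (u.1 - t0) = x1 - t0 := by
        rw [hs]; exact div_mul_cancel₀ _ (by linarith)
      have hmem : ((1-s) • ((t0, T.f t0) : ℝ × ℝ) + s • u)
          ∈ segment ℝ ((t0, T.f t0) : ℝ × ℝ) u :=
        ⟨1 - s, s, by linarith, le_of_lt hs0, by ring, rfl⟩
      have hvq := hvis t0 ⟨le_refl _, le_of_lt ht01⟩ _ hmem
      have hP1 : ((1-s) • ((t0, T.f t0) : ℝ × ℝ) + s • u).1 = x1 := by
        simp only [Prod.fst_add, Prod.smul_fst, smul_eq_mul]
        linear_combination hseq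
      have hP2 : ((1-s) • ((t0, T.f t0) : ℝ × ℝ) + s • u).2
          = (1-s) * T.f t0 + s * u.2 := by
        simp only [Prod.snd_add, Prod.smul_snd, smul_eq_mul]
      rw [hP1, hP2] at hvq
      have hvq' := hvq ⟨by linarith, hbr⟩
      have hf0 : T.f t0 = T.m i * t0 + T.c i :=
        T.haff i t0 ⟨le_refl _, le_of_lt ht01⟩
      have hf1 : T.f x1 = T.m i * x1 + T.c i :=
        T.haff i x1 ⟨le_of_lt ht01, le_refl _⟩
      rw [hf0, hf1] at hvq'
      nlinarith [hvq', hseq, hs0]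
  · intro p₁ p₂ p₃ h12 h23 hv1 hv3
    intro t ht q hq hq1
    obtain ⟨a', b', ha', hb', hab', hq'⟩ := hq
    have hq1' : a' * t + b' * p₂ = q.1 := by
      have := congrArg Prod.fst hq'
      simpa [smul_eq_mul] using this
    have hq2' : a' * T.f t + b' * h = q.2 := by
      have := congrArg Prod.snd hq'
      simpa [smul_eq_mul] using this
    have hta : t ∈ Set.Icc T.a T.b := ⟨le_trans hal ht.1, le_trans ht.2 hbr⟩
    have hfth : T.f t ≤ h := hh t hta
    rcases le_total t q.1 with hcase | hcase
    · rcases le_or_gt p₃ t with hp3 | hp3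
      · have habt : a' * t + b' * t = t := by linear_combination t * hab'
        have hle : q.1 ≤ t := by
          nlinarith [hq1', habt, mul_nonneg hb' (by linarith : (0:ℝ) ≤ t - p₂)]
        have hqt : q.1 = t := le_antisymm hle hcase
        have habf : a' * T.f t + b' * T.f t = T.f t := by
          linear_combination (T.f t) * hab'
        rw [hqt, ← hq2']
        nlinarith [habf, mul_nonneg hb' (by linarith : (0:ℝ) ≤ h - T.f t)]
      · set σ : ℝ := (q.1 - t) / (p₃ - t) with hσdef
        have hσ0 : 0 ≤ σ := div_nonneg (by linarith) (by linarith)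
        have hσeq : σ * (p₃ - t) = q.1 - t := by
          rw [hσdef]; exact div_mul_cancel₀ _ (by linarith)
        have habt : a' * t + b' * t = t := by linear_combination t * hab'
        have hσb : σ ≤ b' := by
          nlinarith [hσeq, hq1', habt, hp3,
            mul_nonneg hb' (by linarith : (0:ℝ) ≤ p₃ - p₂)]
        have hmem : ((q.1, (1-σ) * T.f t + σ * h) : ℝ × ℝ)
            ∈ segment ℝ ((t, T.f t) : ℝ × ℝ) ((p₃, h) : ℝ × ℝ) := by
          refine ⟨1 - σ, σ, by linarith, hσ0, by ring, ?_⟩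
          simp only [Prod.smul_mk, Prod.mk_add_mk, smul_eq_mul, Prod.mk.injEq]
          exact ⟨by linear_combination hσeq, trivial⟩
        have key := hv3 t ht _ hmem hq1
        simp only at key
        have habf : a' * T.f t + b' * T.f t = T.f t := by
          linear_combination (T.f t) * hab'
        rw [← hq2']
        nlinarith [key, habf,
          mul_nonneg (by linarith : (0:ℝ) ≤ b' - σ) (by linarith : (0:ℝ) ≤ h - T.f t)]
    · rcases le_or_gt t p₁ with hp1 | hp1
      · have habt : a' * t + b' * t = t := by linear_combination t * hab'
        have hge : t ≤ q.1 := by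
          nlinarith [hq1', habt, mul_nonneg hb' (by linarith : (0:ℝ) ≤ p₂ - t)]
        have hqt : q.1 = t := le_antisymm hcase hge
        have habf : a' * T.f t + b' * T.f t = T.f t := by
          linear_combination (T.f t) * hab'
        rw [hqt, ← hq2']
        nlinarith [habf, mul_nonneg hb' (by linarith : (0:ℝ) ≤ h - T.f t)]
      · set σ : ℝ := (t - q.1) / (t - p₁) with hσdef
        have hσ0 : 0 ≤ σ := div_nonneg (by linarith) (by linarith)
        have hσeq : σ * (t - p₁) = t - q.1 := by
          rw [hσdef]; exact div_mul_cancel₀ _ (by linarith)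
        have habt : a' * t + b' * t = t := by linear_combination t * hab'
        have hσb : σ ≤ b' := by
          nlinarith [hσeq, hq1', habt, hp1,
            mul_nonneg hb' (by linarith : (0:ℝ) ≤ p₂ - p₁)]
        have hmem : ((q.1, (1-σ) * T.f t + σ * h) : ℝ × ℝ)
            ∈ segment ℝ ((t, T.f t) : ℝ × ℝ) ((p₁, h) : ℝ × ℝ) := by
          refine ⟨1 - σ, σ, by linarith, hσ0, by ring, ?_⟩
          simp only [Prod.smul_mk, Prod.mk_add_mk, smul_eq_mul, Prod.mk.injEq]
          exact ⟨by linear_combination -hσeq, trivial⟩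
        have key := hv1 t ht _ hmem hq1
        simp only at key
        have habf : a' * T.f t + b' * T.f t = T.f t := by
          linear_combination (T.f t) * hab'
        rw [← hq2']
        nlinarith [key, habf,
          mul_nonneg (by linarith : (0:ℝ) ≤ b' - σ) (by linarith : (0:ℝ) ≤ h - T.f t)]
end

section
/- Let T be an x-monotone terrain, h₁ < h₂ two heights above T, and e an edge of T. If F(e,h) denotes the x-coordinate of the rightmost point on the horizontal line at height h from which e is fully visible, then F(e,h₁) ≤ F(e,h₂), i.e., F(e,·) is monotone non-decreasing in h. -/
open Set

namespace Terrain

/-- The point of the segment towards `(u.1, h)` lies directly above the corresponding point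
of the segment towards `u`, so raising the guard preserves visibility. -/
theorem Vis.mono_snd {T : Terrain} {p u : ℝ × ℝ} {h : ℝ} (hv : T.Vis p u) (hh : u.2 ≤ h) :
    T.Vis p (u.1, h) := by
  rintro _ ⟨a, b, ha, hb, hab, rfl⟩ hq
  have below := hv (a • p + b • u) ⟨a, b, ha, hb, hab, rfl⟩ (by simpa using hq)
  simp only [Prod.fst_add, Prod.snd_add, Prod.smul_fst, Prod.smul_snd, smul_eq_mul] at below ⊢
  linarith [mul_le_mul_of_nonneg_left hh hb]

theorem EdgeVis.mono_snd {T : Terrain} {i : Fin T.N} {u : ℝ × ℝ} {h : ℝ}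
    (hv : T.EdgeVis i u) (hh : u.2 ≤ h) : T.EdgeVis i (u.1, h) :=
  fun t ht => (hv t ht).mono_snd hh

end Terrain

theorem stmt15_general (T : Terrain) (i : Fin T.N) (h₁ h₂ : ℝ) (h₁₂ : h₁ < h₂)
    (F₁ F₂ : ℝ)
    (hF₁vis : T.EdgeVis i (F₁, h₁))
    (hF₂max : ∀ p : ℝ, T.EdgeVis i (p, h₂) → p ≤ F₂) :
    F₁ ≤ F₂ :=
  hF₂max F₁ (hF₁vis.mono_snd h₁₂.le)

/-- The x-coordinate `F(e,h)` of the rightmost point on the line `y = h` from which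
the edge `e` is fully visible is monotone non-decreasing in `h`. -/
theorem stmt15 (T : Terrain) (i : Fin T.N) (h₁ h₂ : ℝ) (h₁₂ : h₁ < h₂)
    (hh₁ : ∀ t ∈ Set.Icc T.a T.b, T.f t ≤ h₁)
    (F₁ F₂ : ℝ)
    (hF₁vis : T.EdgeVis i (F₁, h₁)) (hF₁max : ∀ p : ℝ, T.EdgeVis i (p, h₁) → p ≤ F₁)
    (hF₂vis : T.EdgeVis i (F₂, h₂)) (hF₂max : ∀ p : ℝ, T.EdgeVis i (p, h₂) → p ≤ F₂) :
    F₁ ≤ F₂ :=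
  stmt15_general T i h₁ h₂ h₁₂ F₁ F₂ hF₁vis hF₂max
end

section
/- Let T be an x-monotone terrain on vertices v₁,...,vₙ, and let T be partitioned into k consecutive subchains T₁,...,T_k, each covered by its own guard on a horizontal line L(h) above T, where the guards are constrained to see their entire assigned subchain. Then there is such a partition in which every endpoint of every subchain is a vertex of T, using the same height h. -/
open Set

lemma terrain_vis_iff (T : Terrain) (P U : ℝ × ℝ) :
    T.Vis P U ↔ ∀ s ∈ Icc (0:ℝ) 1,
      (1-s)*P.1 + s*U.1 ∈ Icc T.a T.b → T.f ((1-s)*P.1 + s*U.1) ≤ (1-s)*P.2 + s*U.2 := by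
  constructor
  · intro H s hs hdom
    have hmem : ((1-s)*P.1 + s*U.1, (1-s)*P.2 + s*U.2) ∈ segment ℝ P U := by
      rw [segment_eq_image]
      refine ⟨s, hs, ?_⟩
      simp [Prod.ext_iff, smul_eq_mul]
    simpa using H _ hmem (by simpa using hdom)
  · intro H q hq hdom
    rw [segment_eq_image] at hq
    obtain ⟨s, hs, rfl⟩ := hq
    have h1 : ((1-s) • P + s • U).1 = (1-s)*P.1 + s*U.1 := by simp [smul_eq_mul]
    have h2 : ((1-s) • P + s • U).2 = (1-s)*P.2 + s*U.2 := by simp [smul_eq_mul]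
    rw [h1] at hdom
    rw [h1, h2]
    exact H s hs hdom

lemma see_above (T : Terrain) {h r : ℝ} (hh : ∀ z ∈ Icc T.a T.b, T.f z ≤ h)
    (hr : r ∈ Icc T.a T.b) : T.Vis (r, T.f r) (r, h) := by
  rw [terrain_vis_iff]
  intro s hs hdom
  simp only
  rw [show (1-s)*r + s*r = r by ring]
  nlinarith [hh r hr, hs.1, hs.2]

lemma move_guard (T : Terrain) {h p xw xu : ℝ}
    (hh : ∀ z ∈ Icc T.a T.b, T.f z ≤ h)
    (hp : p ∈ Icc T.a T.b) (hvis : T.Vis (p, T.f p) (xw, h))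
    (h1 : min p xw ≤ xu) (h2 : xu ≤ max p xw) :
    T.Vis (p, T.f p) (xu, h) := by
  have hfp : T.f p ≤ h := hh p hp
  rw [terrain_vis_iff]
  intro s hs hdom
  simp only at hdom ⊢
  rcases eq_or_ne xw p with he | hne
  · have hxu : xu = p := by
      subst he; rw [min_self] at h1; rw [max_self] at h2; linarith
    rw [hxu, show (1-s)*p + s*p = p by ring]
    nlinarith [hs.1, hs.2]
  · set X := (1-s)*p + s*xu with hX
    have hXp : X - p = s*(xu - p) := by rw [hX]; ring
    set s' := (X - p)/(xw - p) with hs'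
    have hwp : xw - p ≠ 0 := sub_ne_zero.mpr hne
    have hxx : (1-s')*p + s'*xw = X := by
        rw [hs']; linear_combination (div_mul_cancel₀ (X - p) hwp : (X - p)/(xw - p) * (xw - p) = X - p)
    have hs'0 : 0 ≤ s' ∧ s' ≤ s := by
      rcases le_total p xw with hc | hc
      · rw [min_eq_left hc] at h1
        rw [max_eq_right hc] at h2
        have hpx : p < xw := lt_of_le_of_ne hc (Ne.symm hne)
        constructor
        · apply div_nonneg; nlinarith [hs.1]; linarith
        · rw [div_le_iff₀ (by linarith)]; nlinarith [hs.1]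
      · rw [min_eq_right hc] at h1
        rw [max_eq_left hc] at h2
        have hpx : xw < p := lt_of_le_of_ne hc hne
        constructor
        · rw [div_nonneg_iff]; right; constructor; nlinarith [hs.1]; linarith
        · rw [div_le_iff_of_neg (by linarith)]; nlinarith [hs.1]
    have hs'1 : s' ≤ 1 := le_trans hs'0.2 hs.2
    have key := (terrain_vis_iff T (p, T.f p) (xw, h)).mp hvis s' ⟨hs'0.1, hs'1⟩
    simp only at key
    rw [hxx] at key
    have key2 := key hdom
    nlinarith [mul_nonneg (sub_nonneg.mpr hs'0.2) (sub_nonneg.mpr hfp)]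

set_option maxHeartbeats 2000000 in
lemma left_ext (T : Terrain) {h : ℝ} (hh : ∀ z ∈ Icc T.a T.b, T.f z ≤ h)
    (e : Fin T.N) {p t xu w : ℝ}
    (hpl : T.x e.castSucc ≤ p) (hpt : p < t) (htr : t ≤ T.x e.succ)
    (hxu : p ≤ xu)
    (hvp : T.Vis (p, T.f p) (xu, h))
    (hwl : T.x e.castSucc ≤ w) (hwp : w ≤ p) :
    T.Vis (w, T.f w) (xu, h) := by
  set vl := T.x e.castSucc with hvl
  set vr := T.x e.succ with hvr
  set M := T.m e
  set C := T.c e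
  have havl : T.a ≤ vl := T.hx.monotone (Fin.zero_le _)
  have hvrb : vr ≤ T.b := T.hx.monotone (Fin.le_last _)
  have hdomz : ∀ z, vl ≤ z → z ≤ vr → z ∈ Icc T.a T.b :=
    fun z h1 h2 => ⟨le_trans havl h1, le_trans h2 hvrb⟩
  have hfz : ∀ z, vl ≤ z → z ≤ vr → T.f z = M*z + C := fun z h1 h2 => T.haff e z ⟨h1, h2⟩
  have htvr : t ≤ vr := htr
  have hfp : T.f p = M*p + C := hfz p hpl (by linarith)
  have hft : T.f t = M*t + C := hfz t (by linarith) htr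
  have hfw : T.f w = M*w + C := hfz w hwl (by linarith)
  -- Step 1 : h is at or above the extended edge line at xu
  have hH : M*xu + C ≤ h := by
    rcases le_or_gt xu vr with hc | hc
    · have h1 := hh xu (hdomz xu (by linarith) hc)
      rwa [hfz xu (by linarith) hc] at h1
    · have hxup : p < xu := by linarith
      set s := (t - p)/(xu - p) with hs
      have hs0 : 0 ≤ s := div_nonneg (by linarith) (by linarith)
      have hs1 : s ≤ 1 := by rw [div_le_one (by linarith)]; linarith
      have hseq : s*(xu - p) = t - p := by
        rw [hs]; exact div_mul_cancel₀ _ (ne_of_gt (by linarith : (0:ℝ) < xu - p))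
      have key := (terrain_vis_iff T (p, T.f p) (xu, h)).mp hvp s ⟨hs0, hs1⟩
      simp only at key
      rw [show (1-s)*p + s*xu = t by linarith [hseq]] at key
      have key2 := key (hdomz t (by linarith) htr)
      rw [hft, hfp] at key2
      -- key2 : M*t + C ≤ (1-s)*(M*p+C) + s*h
      have k0 : M*(t-p) ≤ s*(h - (M*p+C)) := by nlinarith [key2]
      have k1 := mul_le_mul_of_nonneg_right k0 (le_of_lt (sub_pos.mpr hxup))
      have k2 : s*(h - (M*p+C))*(xu-p) = (t-p)*(h - (M*p+C)) := by
        rw [show s*(h - (M*p+C))*(xu-p) = s*(xu-p)*(h - (M*p+C)) by ring, hseq]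
      rw [k2] at k1
      nlinarith [k1, sub_pos.mpr hpt]
  rw [terrain_vis_iff]
  intro r hr hdom
  simp only at hdom ⊢
  set X := (1-r)*w + r*xu with hX
  clear_value X
  have hreq : X - w = r*(xu - w) := by rw [hX]; ring
  have hwxu : w ≤ xu := by linarith
  have hxlb : w ≤ X := by nlinarith [hr.1]
  have hxub : X ≤ xu := by nlinarith [hr.2]
  rw [hfw]
  rcases le_or_gt X vr with hc | hc
  · rw [hfz X (by linarith) hc, hX]
    nlinarith [mul_nonneg hr.1 (sub_nonneg.mpr hH)]
  · -- X beyond the right vertex; use the segment to p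
    have hpX : p < X := by linarith
    have hxup : p < xu := by linarith
    set s := (X - p)/(xu - p) with hs
    have hs0 : 0 ≤ s := div_nonneg (by linarith) (by linarith)
    have hs1 : s ≤ 1 := by rw [div_le_one (by linarith)]; linarith
    have hseq : s*(xu - p) = X - p := by
      rw [hs]; exact div_mul_cancel₀ _ (ne_of_gt (by linarith : (0:ℝ) < xu - p))
    have key := (terrain_vis_iff T (p, T.f p) (xu, h)).mp hvp s ⟨hs0, hs1⟩
    simp only at key
    rw [show (1-s)*p + s*xu = X by linarith [hseq]] at key
    have key2 := key hdom
    rw [hfp] at key2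
    -- key2 : T.f X ≤ (1-s)*(M*p+C) + s*h
    have hrs : s ≤ r := by
      have hpos : (0:ℝ) < (xu-p)*(xu-w) := mul_pos (by linarith) (by linarith)
      have h5 : s*((xu-p)*(xu-w)) ≤ r*((xu-p)*(xu-w)) := by
        have e1 : s*((xu-p)*(xu-w)) = (X-p)*(xu-w) := by rw [← mul_assoc, hseq]
        have e2 : r*((xu-p)*(xu-w)) = (X-w)*(xu-p) := by
          rw [show r*((xu-p)*(xu-w)) = (r*(xu-w))*(xu-p) by ring, ← hreq]
        rw [e1, e2]
        nlinarith [mul_nonneg (sub_nonneg.mpr hwp) (sub_nonneg.mpr hxub)]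
      exact (mul_le_mul_iff_of_pos_right hpos).mp h5
    clear_value s
    have E1 : (1-s)*(M*p+C) + s*h = M*X + C + s*(h - (M*xu + C)) := by
      linear_combination M * hseq
    have E2 : (1-r)*(M*w+C) + r*h = M*X + C + r*(h - (M*xu + C)) := by
      linear_combination (-M) * hreq
    have S1 : s*(h - (M*xu+C)) ≤ r*(h - (M*xu+C)) :=
      mul_le_mul_of_nonneg_right hrs (by linarith)
    rw [E1] at key2
    rw [E2]
    linarith [S1, key2]

open Classical in
noncomputable def fidx (T : Terrain) (r : ℝ) (hr : T.x 0 ≤ r) : Fin (T.N + 1) :=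
  (Finset.univ.filter fun i => T.x i ≤ r).max' ⟨0, by simp [hr]⟩

open Classical in
lemma fidx_le (T : Terrain) (r : ℝ) (hr : T.x 0 ≤ r) : T.x (fidx T r hr) ≤ r := by
  have := Finset.max'_mem (Finset.univ.filter fun i => T.x i ≤ r)
    (⟨0, by simp [hr]⟩ : Finset.Nonempty _)
  simpa [fidx] using (Finset.mem_filter.mp this).2

open Classical in
lemma le_fidx (T : Terrain) (r : ℝ) (hr : T.x 0 ≤ r) {i : Fin (T.N + 1)}
    (hi : T.x i ≤ r) : i ≤ fidx T r hr :=
  Finset.le_max' _ i (by simp [hi])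

set_option maxHeartbeats 2000000 in
/-- If `T` is partitioned into `k` consecutive subchains, each fully visible from
its own guard on `L(h)`, then there is such a partition, at the same height `h`,
in which every endpoint of every subchain is a vertex of `T`. -/
theorem stmt18 (T : Terrain) (k : ℕ) (hk : 1 ≤ k) (h : ℝ)
    (hh : ∀ t ∈ Set.Icc T.a T.b, T.f t ≤ h)
    (p : Fin (k + 1) → ℝ) (hpmono : Monotone p)
    (hp0 : p 0 = T.a) (hpk : p (Fin.last k) = T.b)
    (u : Fin k → ℝ × ℝ) (hu : ∀ i, (u i).2 = h)
    (hcov : ∀ i : Fin k, ∀ t ∈ Set.Icc (p i.castSucc) (p i.succ),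
      T.Vis (t, T.f t) (u i)) :
    ∃ q : Fin (k + 1) → ℝ, Monotone q ∧ q 0 = T.a ∧ q (Fin.last k) = T.b ∧
      (∀ j : Fin (k + 1), q j ∈ Set.range T.x) ∧
      ∃ u' : Fin k → ℝ × ℝ, (∀ i, (u' i).2 = h) ∧
        ∀ i : Fin k, ∀ t ∈ Set.Icc (q i.castSucc) (q i.succ),
          T.Vis (t, T.f t) (u' i) := by
  have hx0a : T.x 0 = T.a := rfl
  have hr : ∀ j, T.x 0 ≤ p j := by
    intro j
    rw [hx0a, ← hp0]
    exact hpmono (Fin.zero_le j)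
  have hpab : ∀ j, p j ∈ Icc T.a T.b := by
    intro j
    exact ⟨hp0 ▸ hpmono (Fin.zero_le j), hpk ▸ hpmono (Fin.le_last j)⟩
  set q : Fin (k + 1) → ℝ := fun j => T.x (fidx T (p j) (hr j)) with hq
  have hqle : ∀ j, q j ≤ p j := fun j => fidx_le T (p j) (hr j)
  have hqmono : Monotone q := by
    intro i j hij
    exact T.hx.monotone (le_fidx T (p j) (hr j) (le_trans (hqle i) (hpmono hij)))
  have hqab : ∀ j, q j ∈ Icc T.a T.b := by
    intro j
    exact ⟨T.hx.monotone (Fin.zero_le _), T.hx.monotone (Fin.le_last _)⟩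
  -- the clamped guards
  set g : Fin k → ℝ := fun i =>
    if q i.succ ≤ p i.castSucc then q i.castSucc
    else max (p i.castSucc) (min (u i).1 (p i.succ)) with hg
  refine ⟨q, hqmono, ?_, ?_, fun j => ⟨_, rfl⟩, fun i => (g i, h), fun i => rfl, ?_⟩
  · -- q 0 = T.a
    refine le_antisymm ?_ ?_
    · rw [← hp0]; exact hqle 0
    · rw [← hx0a]; exact T.hx.monotone (Fin.zero_le _)
  · -- q last = T.b
    refine le_antisymm (T.hx.monotone (Fin.le_last _)) ?_
    have : Fin.last T.N ≤ fidx T (p (Fin.last k)) (hr _) :=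
      le_fidx T _ _ (le_of_eq hpk.symm)
    exact T.hx.monotone this
  · -- coverage
    intro i t ht
    have hcs : p i.castSucc ≤ p i.succ := hpmono (Fin.castSucc_le_succ i)
    -- visibility of all of [p_i, p_{i+1}] from the clamped guard
    have hclamp : ∀ z ∈ Icc (p i.castSucc) (p i.succ),
        T.Vis (z, T.f z) (max (p i.castSucc) (min (u i).1 (p i.succ)), h) := by
      intro z hz
      have hzab : z ∈ Icc T.a T.b := ⟨le_trans (hpab i.castSucc).1 hz.1, le_trans hz.2 (hpab i.succ).2⟩
      have horig : T.Vis (z, T.f z) ((u i).1, h) := by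
        have he : ((u i).1, h) = u i := by rw [← hu i]
        rw [he]
        exact hcov i z hz
      set c := max (p i.castSucc) (min (u i).1 (p i.succ)) with hc
      refine move_guard T hh hzab horig ?_ ?_
      · -- min z (u i).1 ≤ c
        rcases le_total (u i).1 (p i.succ) with h1 | h1
        · calc min z (u i).1 ≤ (u i).1 := min_le_right _ _
            _ = min (u i).1 (p i.succ) := (min_eq_left h1).symm
            _ ≤ c := le_max_right _ _
        · calc min z (u i).1 ≤ z := min_le_left _ _
            _ ≤ p i.succ := hz.2
            _ = min (u i).1 (p i.succ) := (min_eq_right h1).symm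
            _ ≤ c := le_max_right _ _
      · -- c ≤ max z (u i).1
        apply max_le
        · exact le_trans hz.1 (le_max_left _ _)
        · exact le_trans (min_le_left _ _) (le_max_right _ _)
    by_cases hdeg : q i.succ ≤ p i.castSucc
    · -- degenerate: q i.succ = q i.castSucc
      have hqq : q i.succ ≤ q i.castSucc :=
        T.hx.monotone (le_fidx T (p i.castSucc) (hr _) hdeg)
      have hteq : t = q i.castSucc :=
        le_antisymm (le_trans ht.2 hqq) ht.1
      have hgi : g i = q i.castSucc := by rw [hg]; simp [hdeg]
      rw [hteq]
      show T.Vis (q i.castSucc, T.f (q i.castSucc)) (g i, h)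
      rw [hgi]
      exact see_above T hh (hqab i.castSucc)
    · push_neg at hdeg
      have hgi : g i = max (p i.castSucc) (min (u i).1 (p i.succ)) := by
        rw [hg]; simp [not_le.mpr hdeg]
      show T.Vis (t, T.f t) (g i, h)
      rw [hgi]
      rcases le_or_gt (p i.castSucc) t with hcase | hcase
      · -- t in the original interval
        exact hclamp t ⟨hcase, le_trans ht.2 (le_trans (hqle i.succ) (le_refl _))⟩
      · -- t < p i.castSucc : use left_ext on the edge containing p i.castSucc
        set j0 := fidx T (p i.castSucc) (hr i.castSucc) with hj0
        have hqlt : q i.castSucc < p i.castSucc := lt_of_le_of_lt ht.1 hcase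
        have hj0N : (j0 : ℕ) < T.N := by
          by_contra hcon
          push_neg at hcon
          have : j0 = Fin.last T.N := by
            apply Fin.ext
            exact le_antisymm (Nat.lt_succ_iff.mp j0.isLt) hcon
          have hb : q i.castSucc = T.b := by rw [hq]; simp only; rw [← hj0, this]; rfl
          have := (hpab i.castSucc).2
          rw [← hb] at this
          exact absurd (le_antisymm (hqle i.castSucc) this) (ne_of_lt hqlt)
        set e : Fin T.N := ⟨(j0 : ℕ), hj0N⟩ with he
        have hecast : e.castSucc = j0 := by
          apply Fin.ext; simp [he]
        have hvl : T.x e.castSucc = q i.castSucc := by rw [hecast]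
        have hpvr : p i.castSucc < T.x e.succ := by
          by_contra hcon
          push_neg at hcon
          have := le_fidx T (p i.castSucc) (hr _) hcon
          have h2 : (e.succ : ℕ) ≤ (j0 : ℕ) := this
          simp [he] at h2
        have hpsucc : p i.castSucc < p i.succ := lt_of_lt_of_le hdeg (hqle i.succ)
        have htvr : p i.castSucc < min (p i.succ) (T.x e.succ) := lt_min hpsucc hpvr
        refine left_ext T hh e (hvl ▸ hqle i.castSucc) htvr (min_le_right _ _) (le_max_left _ _) ?_ (hvl ▸ ht.1) (le_of_lt hcase)
        · exact hclamp (p i.castSucc) ⟨le_refl _, hcs⟩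
end
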